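/- Let Ω be a finite set and let G ≤ Sym(Ω) be a 3/2-transitive permutation group. Then G is either primitive or a Frobenius group. -/

import Mathlib

section Prelude

variable {Ω : Type*}

/-- `G` is transitive on `Ω`. -/
def IsTransSub (G : Subgroup (Equiv.Perm Ω)) : Prop :=
  ∀ a b : Ω, ∃ g ∈ G, g a = b

/-- The orbit of `β` under the stabilizer of `α` in `G`. -/
def stabOrbit (G : Subgroup (Equiv.Perm Ω)) (α β : Ω) : Set Ω :=
  {γ : Ω | ∃ g ∈ G, g α = α ∧ g β = γ}

/-- `G` is `3/2`-transitive: transitive, and all orbits of a point stabilizer `G_α`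
on `Ω \ {α}` have the same size `m > 1`. -/
def IsThreeHalvesTrans (G : Subgroup (Equiv.Perm Ω)) : Prop :=
  IsTransSub G ∧ ∃ m : ℕ, 1 < m ∧ ∀ α β : Ω, β ≠ α → (stabOrbit G α β).ncard = m

/-- `G` is `2`-transitive. -/
def IsTwoTrans (G : Subgroup (Equiv.Perm Ω)) : Prop :=
  ∀ a b c d : Ω, a ≠ b → c ≠ d → ∃ g ∈ G, g a = c ∧ g b = d

/-- The partition (equivalence relation) `r` is preserved by `G`. -/
def IsGInvariantSetoid (G : Subgroup (Equiv.Perm Ω)) (r : Setoid Ω) : Prop :=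
  ∀ g ∈ G, ∀ a b : Ω, r a b → r (g a) (g b)

/-- `G` is primitive: transitive and the only `G`-invariant partitions of `Ω` are
the partition into singletons (`⊥`) and the one-class partition (`⊤`). -/
def IsPrimitiveSub (G : Subgroup (Equiv.Perm Ω)) : Prop :=
  IsTransSub G ∧ ∀ r : Setoid Ω, IsGInvariantSetoid G r → r = ⊥ ∨ r = ⊤

/-- `G` is a Frobenius group: transitive, point stabilizers are nontrivial, and
two-point stabilizers are trivial. -/
def IsFrobeniusSub (G : Subgroup (Equiv.Perm Ω)) : Prop :=
  IsTransSub G ∧ (∀ α : Ω, ∃ g ∈ G, g ≠ 1 ∧ g α = α) ∧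
    (∀ g ∈ G, ∀ α β : Ω, α ≠ β → g α = α → g β = β → g = 1)

/-- The `k`-closure of `G`: all permutations `σ` such that for every `k`-tuple `v`
there is `g ∈ G` agreeing with `σ` on `v`; it is the largest subgroup of `Sym(Ω)`
with the same orbits as `G` on `Ω^k`. -/
def kClosure (G : Subgroup (Equiv.Perm Ω)) (k : ℕ) : Subgroup (Equiv.Perm Ω) where
  carrier := {σ : Equiv.Perm Ω | ∀ v : Fin k → Ω, ∃ g ∈ G, ∀ i, σ (v i) = g (v i)}
  one_mem' := fun v => ⟨1, G.one_mem, fun _ => rfl⟩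
  mul_mem' := by
    intro a b ha hb v
    obtain ⟨g, hg, hgv⟩ := hb v
    obtain ⟨h, hh, hhv⟩ := ha fun i => b (v i)
    refine ⟨h * g, G.mul_mem hh hg, fun i => ?_⟩
    simp only [Equiv.Perm.mul_apply]
    rw [hhv i, hgv i]
  inv_mem' := by
    intro a ha v
    obtain ⟨g, hg, hgv⟩ := ha fun i => a⁻¹ (v i)
    refine ⟨g⁻¹, G.inv_mem hg, fun i => ?_⟩
    have h := hgv i
    rw [show a (a⁻¹ (v i)) = v i from by simp] at h
    calc a⁻¹ (v i) = g⁻¹ (g (a⁻¹ (v i))) := by simp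
    _ = g⁻¹ (v i) := by rw [← h]

/-- `G` is an affine permutation group: it has a normal subgroup `V` which is an
elementary abelian `p`-group acting regularly on `Ω`. -/
def IsAffineSub (G : Subgroup (Equiv.Perm Ω)) : Prop :=
  ∃ p : ℕ, p.Prime ∧ ∃ V : Subgroup (Equiv.Perm Ω), V ≤ G ∧
    (∀ g ∈ G, ∀ v ∈ V, g * v * g⁻¹ ∈ V) ∧
    (∀ v ∈ V, ∀ w ∈ V, v * w = w * v) ∧
    (∀ v ∈ V, v ^ p = 1) ∧
    (∀ a b : Ω, ∃! v : Equiv.Perm Ω, v ∈ V ∧ v a = b)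

/-- `G` is almost simple: it has a nonabelian simple normal subgroup `S` whose
centralizer in `G` is trivial. -/
def IsAlmostSimpleSub (G : Subgroup (Equiv.Perm Ω)) : Prop :=
  ∃ S : Subgroup (Equiv.Perm Ω), S ≤ G ∧
    (∀ g ∈ G, ∀ s ∈ S, g * s * g⁻¹ ∈ S) ∧
    IsSimpleGroup S ∧ (∃ s ∈ S, ∃ t ∈ S, s * t ≠ t * s) ∧
    (∀ g ∈ G, (∀ s ∈ S, g * s = s * g) → g = 1)

/-- The conjugation homomorphism `Sym(α) → Sym(β)` induced by a bijection `e : α ≃ β`. -/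
def permConjHom {α β : Type*} (e : α ≃ β) : Equiv.Perm α →* Equiv.Perm β where
  toFun σ := e.permCongr σ
  map_one' := by ext x; simp
  map_mul' σ τ := by
    ext x
    simp [Equiv.Perm.mul_apply]

/-- The conjugate of `G ≤ Sym(α)` under a bijection `e : α ≃ β`. -/
def conjGroup {α β : Type*} (e : α ≃ β) (G : Subgroup (Equiv.Perm α)) :
    Subgroup (Equiv.Perm β) :=
  G.map (permConjHom e)

/-- The affine semilinear group `AΓL(1, p^d)` over a field `F` (of order `p^d`),
as a set of permutations: all maps `x ↦ a * x^(p^i) + b` with `a ≠ 0`, `0 ≤ i < d`. -/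
def AGammaL1Set (F : Type*) [Field F] (p d : ℕ) : Set (Equiv.Perm F) :=
  {σ : Equiv.Perm F | ∃ (a b : F) (i : ℕ), a ≠ 0 ∧ i < d ∧ ∀ x : F, σ x = a * x ^ p ^ i + b}

/-- The Passman group `AS₀` over a field `F` (of order `p^(d/2)`) with respect to
a generator `θ` of `Fˣ`: the subgroup of `Sym(F × F)` generated by all translations
together with `(x,y) ↦ (θx, θ⁻¹y)`, `(x,y) ↦ (-x, y)` and `(x,y) ↦ (y, x)`. -/
def PassmanGroup (F : Type*) [Field F] (θ : Fˣ) : Subgroup (Equiv.Perm (F × F)) :=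
  Subgroup.closure
    ({σ : Equiv.Perm (F × F) | ∃ u v : F, σ = (Equiv.addRight u).prodCongr (Equiv.addRight v)} ∪
      {(Equiv.mulLeft₀ (θ : F) θ.ne_zero).prodCongr
          (Equiv.mulLeft₀ ((θ⁻¹ : Fˣ) : F) θ⁻¹.ne_zero),
        (Equiv.neg F).prodCongr (Equiv.refl F),
        Equiv.prodComm F F})

/-- The socle of a group: the subgroup generated by all minimal normal subgroups. -/
def groupSocle (H : Type*) [Group H] : Subgroup H :=
  sSup {N : Subgroup H | N.Normal ∧ N ≠ ⊥ ∧
    ∀ M : Subgroup H, M.Normal → M ≠ ⊥ → M ≤ N → M = N}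

end Prelude

/-!
Let `G` be 3/2-transitive with subdegree `m`, preserving a partition whose blocks have size
`k` and which is neither trivial nor universal. The block of `α` minus `α` is a union of
`G_α`-orbits, so `m ∣ k - 1` and `m` is coprime to `k`. For a `G_α`-orbit `Γ` outside the block
of `α`, the union of the `t ≤ m` blocks meeting `Γ` is again a union of `G_α`-orbits, so
`m ∣ t * k`; hence `t = m`, i.e. `Γ` meets each block at most once. Therefore an element fixing
two points in different blocks fixes both blocks pointwise. For `β ≠ α` in the block of `α` and
`γ` outside it this gives `G_αγ ≤ G_αβ`; both have index `m` in `G_α`, so they are equal, and an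
element fixing two points of a block fixes everything outside it, hence (using a second block)
everything. So two-point stabilizers are trivial, while `m > 1` makes point stabilizers
nontrivial.
-/

open MulAction

theorem Set.ncard_eq_ncard_image_mul {α β : Type*} {s : Set α} (hs : s.Finite) (f : α → β)
    {k : ℕ} (hfib : ∀ x ∈ s, {y ∈ s | f y = f x}.ncard = k) :
    s.ncard = (f '' s).ncard * k := by
  classical
  lift s to Finset α using hs
  rw [Set.ncard_coe_finset, ← Finset.coe_image, Set.ncard_coe_finset,
    Finset.card_eq_sum_card_image f s, ← smul_eq_mul, ← Finset.sum_const]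
  refine Finset.sum_congr rfl fun b hb => ?_
  obtain ⟨x, hx, rfl⟩ := Finset.mem_image.mp hb
  rw [← hfib x hx, ← Set.ncard_coe_finset, Finset.coe_filter]
  rfl

theorem MulAction.stabilizer_eq_of_le_of_ncard_orbit_eq {H X : Type*} [Group H] [Finite H]
    [MulAction H X] {x y : X} (hle : stabilizer H x ≤ stabilizer H y)
    (horb : (orbit H x).ncard = (orbit H y).ncard) : stabilizer H x = stabilizer H y := by
  refine Subgroup.eq_of_le_of_card_ge hle (Nat.le_of_eq (Nat.eq_of_mul_eq_mul_right
    (Nat.pos_of_ne_zero (stabilizer H x).index_ne_zero_of_finite) ?_))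
  rw [Subgroup.card_mul_index, index_stabilizer, horb, ← index_stabilizer,
    Subgroup.card_mul_index]

section StabilizerOrbits

variable {Ω : Type*} {G : Subgroup (Equiv.Perm Ω)}

theorem mem_stabOrbit_self (G : Subgroup (Equiv.Perm Ω)) (α β : Ω) : β ∈ stabOrbit G α β :=
  ⟨1, G.one_mem, rfl, rfl⟩

theorem stabOrbit_eq_orbit (G : Subgroup (Equiv.Perm Ω)) (α β : Ω) :
    stabOrbit G α β = orbit (stabilizer G α) β := by
  ext γ
  constructor
  · rintro ⟨g, hg, hgα, rfl⟩
    exact ⟨⟨⟨g, hg⟩, hgα⟩, rfl⟩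
  · rintro ⟨⟨⟨g, hg⟩, hgα⟩, rfl⟩
    exact ⟨g, hg, hgα, rfl⟩

theorem stabOrbit_eq_stabOrbit_iff {α β γ : Ω} :
    stabOrbit G α γ = stabOrbit G α β ↔ γ ∈ stabOrbit G α β := by
  simp only [stabOrbit_eq_orbit, orbit_eq_iff]

theorem apply_mem_stabOrbit {α β γ : Ω} {g : Equiv.Perm Ω} (hg : g ∈ G) (hgα : g α = α)
    (hγ : γ ∈ stabOrbit G α β) : g γ ∈ stabOrbit G α β := by
  rw [stabOrbit_eq_orbit] at hγ ⊢
  exact mem_orbit_of_mem_orbit (⟨⟨g, hg⟩, hgα⟩ : stabilizer G α) hγ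

theorem dvd_ncard_of_stabOrbit_subset [Finite Ω] {α : Ω} {m : ℕ}
    (horb : ∀ β, β ≠ α → (stabOrbit G α β).ncard = m) {s : Set Ω} (hα : α ∉ s)
    (hs : ∀ β ∈ s, stabOrbit G α β ⊆ s) : m ∣ s.ncard := by
  refine Dvd.intro_left _ (Set.ncard_eq_ncard_image_mul s.toFinite (stabOrbit G α) ?_).symm
  intro β hβ
  have hfib : {γ ∈ s | stabOrbit G α γ = stabOrbit G α β} = stabOrbit G α β := by
    ext γ
    simp only [Set.mem_sep_iff, stabOrbit_eq_stabOrbit_iff]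
    exact ⟨And.right, fun hγ => ⟨hs β hβ hγ, hγ⟩⟩
  rw [hfib, horb β (ne_of_mem_of_not_mem hβ hα)]

theorem exists_ne_one_apply_eq_self {α β : Ω}
    (hβ : 1 < (stabOrbit G α β).ncard) : ∃ g ∈ G, g ≠ 1 ∧ g α = α := by
  obtain ⟨γ, ⟨g, hg, hgα, rfl⟩, hgβ⟩ := Set.exists_ne_of_one_lt_ncard hβ β
  exact ⟨g, hg, fun h => hgβ (by rw [h]; rfl), hgα⟩

end StabilizerOrbits

namespace IsGInvariantSetoid

variable {Ω : Type*} {G : Subgroup (Equiv.Perm Ω)} {r : Setoid Ω}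

theorem rel_apply_iff (hr : IsGInvariantSetoid G r) {g : Equiv.Perm Ω} (hg : g ∈ G) {a b : Ω} :
    r (g a) (g b) ↔ r a b :=
  ⟨fun h => by simpa using hr g⁻¹ (G.inv_mem hg) _ _ h, hr g hg a b⟩

theorem exists_ne_rel (htrans : IsTransSub G) (hr : IsGInvariantSetoid G r) (hbot : r ≠ ⊥)
    (α : Ω) : ∃ β, β ≠ α ∧ r β α := by
  obtain ⟨a, b, hab, hne⟩ : ∃ a b, r a b ∧ a ≠ b := by
    by_contra! h
    exact hbot (Setoid.ext fun a b => ⟨h a b, fun hab => hab ▸ r.refl a⟩)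
  obtain ⟨g, hg, rfl⟩ := htrans a α
  exact ⟨g b, g.injective.ne hne.symm, r.symm (hr g hg a b hab)⟩

theorem exists_not_rel (htrans : IsTransSub G) (hr : IsGInvariantSetoid G r) (htop : r ≠ ⊤)
    (α : Ω) : ∃ β, ¬ r β α := by
  obtain ⟨a, b, hab⟩ : ∃ a b, ¬ r a b := by
    by_contra! h
    exact htop (Setoid.eq_top_iff.mpr h)
  obtain ⟨g, hg, rfl⟩ := htrans b α
  exact ⟨g a, (hr.rel_apply_iff hg).not.mpr hab⟩

theorem ncard_block_eq (htrans : IsTransSub G) (hr : IsGInvariantSetoid G r) (α β : Ω) :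
    {x | r x α}.ncard = {x | r x β}.ncard := by
  obtain ⟨g, hg, rfl⟩ := htrans α β
  have hpre : {x | r x α} = g ⁻¹' {x | r x (g α)} := by
    ext x
    exact (hr.rel_apply_iff hg).symm
  rw [hpre, Set.ncard_preimage_of_injective_subset_range g.injective (by simp)]

theorem dvd_ncard_block_sub_one [Finite Ω] (hr : IsGInvariantSetoid G r) {m : ℕ} {α : Ω}
    (horb : ∀ β, β ≠ α → (stabOrbit G α β).ncard = m) : m ∣ {x | r x α}.ncard - 1 := by
  rw [← Set.ncard_sdiff_singleton_of_mem (show α ∈ {x | r x α} from r.refl α)]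
  refine dvd_ncard_of_stabOrbit_subset horb (fun h => h.2 rfl) ?_
  rintro β ⟨hβα, hβ⟩ _ ⟨g, hg, hgα, rfl⟩
  refine ⟨?_, fun h => hβ (g.injective (h.trans hgα.symm))⟩
  exact hgα ▸ hr g hg β α hβα

theorem ncard_saturation [Finite Ω] (htrans : IsTransSub G) (hr : IsGInvariantSetoid G r)
    (s : Set Ω) (α : Ω) :
    {δ | ∃ γ ∈ s, r δ γ}.ncard = (Quotient.mk r '' s).ncard * {x | r x α}.ncard := by
  have himage : Quotient.mk r '' {δ | ∃ γ ∈ s, r δ γ} = Quotient.mk r '' s := by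
    refine Set.Subset.antisymm ?_ (Set.image_mono fun γ hγ => ⟨γ, hγ, r.refl γ⟩)
    rintro _ ⟨δ, ⟨γ, hγ, hδγ⟩, rfl⟩
    exact ⟨γ, hγ, Quotient.sound (r.symm hδγ)⟩
  rw [← himage]
  refine Set.ncard_eq_ncard_image_mul (Set.toFinite _) _ ?_
  rintro δ ⟨γ, hγ, hδγ⟩
  have hfib : {ε ∈ {δ | ∃ γ ∈ s, r δ γ} | Quotient.mk r ε = Quotient.mk r δ} = {ε | r ε δ} := by
    ext ε
    exact ⟨fun h => Quotient.exact h.2, fun h => ⟨⟨γ, hγ, r.trans h hδγ⟩, Quotient.sound h⟩⟩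
  rw [hfib]
  exact hr.ncard_block_eq htrans δ α

theorem injOn_quotient_stabOrbit [Finite Ω] (htrans : IsTransSub G)
    (hr : IsGInvariantSetoid G r) {m : ℕ} (horb : ∀ α β, β ≠ α → (stabOrbit G α β).ncard = m)
    {α β : Ω} (hβ : ¬ r β α) : Set.InjOn (Quotient.mk r) (stabOrbit G α β) := by
  set Γ := stabOrbit G α β
  set q : Ω → Quotient r := Quotient.mk r
  set k := {x | r x α}.ncard
  set blocksΓ := {δ | ∃ γ ∈ Γ, r δ γ}
  have hΓ : Γ.ncard = m := horb α β fun h => hβ (h ▸ r.refl α)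
  have hα : α ∉ blocksΓ := by
    rintro ⟨_, ⟨g, hg, hgα, rfl⟩, hαγ⟩
    exact hβ (r.symm ((hr.rel_apply_iff hg).mp (hgα.symm ▸ hαγ)))
  have hm_dvd : m ∣ blocksΓ.ncard := by
    refine dvd_ncard_of_stabOrbit_subset (horb α) hα ?_
    rintro δ ⟨γ, hγ, hδγ⟩ _ ⟨g, hg, hgα, rfl⟩
    exact ⟨g γ, apply_mem_stabOrbit hg hgα hγ, hr g hg δ γ hδγ⟩
  have hblocks : blocksΓ.ncard = (q '' Γ).ncard * k := hr.ncard_saturation htrans Γ α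
  have hcop : m.Coprime k := by
    have hk : 1 ≤ k := (Set.ncard_pos (Set.toFinite _)).mpr ⟨α, r.refl α⟩
    exact Nat.Coprime.coprime_dvd_left (hr.dvd_ncard_block_sub_one (horb α))
      ((Nat.coprime_self_sub_left hk).mpr (Nat.coprime_one_left k))
  have hq_le : (q '' Γ).ncard ≤ Γ.ncard := Set.ncard_image_le Γ.toFinite
  have hq_pos : 0 < (q '' Γ).ncard :=
    (Set.ncard_pos (Set.toFinite _)).mpr ⟨q β, β, mem_stabOrbit_self G α β, rfl⟩
  -- `m ∣ t * k` with `t = (q '' Γ).ncard ≤ m`, and `m` is coprime to `k`, so `t = m`.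
  have hm_le : m ≤ (q '' Γ).ncard :=
    Nat.le_of_dvd hq_pos (hcop.dvd_of_dvd_mul_right (hblocks ▸ hm_dvd))
  exact Set.injOn_of_ncard_image_eq (by omega)

theorem apply_eq_self_of_rel [Finite Ω] (htrans : IsTransSub G) (hr : IsGInvariantSetoid G r)
    {m : ℕ} (horb : ∀ α β, β ≠ α → (stabOrbit G α β).ncard = m) {g : Equiv.Perm Ω} (hg : g ∈ G)
    {α β γ : Ω} (hβ : ¬ r β α) (hgα : g α = α) (hgβ : g β = β) (hγ : r γ α) : g γ = γ := by
  have hγβ : ¬ r γ β := fun h => hβ (r.trans (r.symm h) hγ)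
  have hgγ : r (g γ) γ := r.trans (hgα ▸ hr g hg γ α hγ) (r.symm hγ)
  exact hr.injOn_quotient_stabOrbit htrans horb hγβ
    (apply_mem_stabOrbit hg hgβ (mem_stabOrbit_self G β γ)) (mem_stabOrbit_self G β γ)
    (Quotient.sound hgγ)

theorem apply_eq_self_of_not_rel [Finite Ω] (htrans : IsTransSub G)
    (hr : IsGInvariantSetoid G r) {m : ℕ} (horb : ∀ α β, β ≠ α → (stabOrbit G α β).ncard = m)
    {g : Equiv.Perm Ω} (hg : g ∈ G) {α β γ : Ω} (hβα : β ≠ α) (hβ : r β α) (hgα : g α = α)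
    (hgβ : g β = β) (hγ : ¬ r γ α) : g γ = γ := by
  set H := stabilizer G α
  -- `G_αγ ≤ G_αβ`, and both have index `m` in `G_α`.
  have hle : stabilizer H γ ≤ stabilizer H β := fun h hh =>
    hr.apply_eq_self_of_rel htrans horb (h : G).2 hγ h.2 hh hβ
  have hγα : γ ≠ α := fun h => hγ (h ▸ r.refl α)
  have horbit : (orbit H γ).ncard = (orbit H β).ncard := by
    rw [← stabOrbit_eq_orbit, ← stabOrbit_eq_orbit, horb α γ hγα, horb α β hβα]
  have hgH : (⟨⟨g, hg⟩, hgα⟩ : H) ∈ stabilizer H β := hgβ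
  rw [← stabilizer_eq_of_le_of_ncard_orbit_eq hle horbit] at hgH
  exact hgH

theorem eq_one_of_rel [Finite Ω] (htrans : IsTransSub G) (hr : IsGInvariantSetoid G r)
    (hbot : r ≠ ⊥) (htop : r ≠ ⊤) {m : ℕ}
    (horb : ∀ α β, β ≠ α → (stabOrbit G α β).ncard = m) {g : Equiv.Perm Ω} (hg : g ∈ G)
    {α β : Ω} (hβα : β ≠ α) (hβ : r β α) (hgα : g α = α) (hgβ : g β = β) : g = 1 := by
  have hfix_out : ∀ x, ¬ r x α → g x = x := fun x hx =>
    hr.apply_eq_self_of_not_rel htrans horb hg hβα hβ hgα hgβ hx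
  obtain ⟨γ, hγ⟩ := hr.exists_not_rel htrans htop α
  obtain ⟨γ', hγ'γ, hγ'⟩ := hr.exists_ne_rel htrans hbot γ
  have hγ'α : ¬ r γ' α := fun h => hγ (r.trans (r.symm hγ') h)
  ext x
  by_cases hx : r x α
  · exact hr.apply_eq_self_of_not_rel htrans horb hg hγ'γ hγ' (hfix_out γ hγ) (hfix_out γ' hγ'α)
      fun h => hγ (r.trans (r.symm h) hx)
  · exact hfix_out x hx

theorem eq_one_of_apply_eq_self [Finite Ω] (htrans : IsTransSub G)
    (hr : IsGInvariantSetoid G r) (hbot : r ≠ ⊥) (htop : r ≠ ⊤) {m : ℕ}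
    (horb : ∀ α β, β ≠ α → (stabOrbit G α β).ncard = m) {g : Equiv.Perm Ω} (hg : g ∈ G)
    {α β : Ω} (hαβ : α ≠ β) (hgα : g α = α) (hgβ : g β = β) : g = 1 := by
  by_cases hβ : r β α
  · exact hr.eq_one_of_rel htrans hbot htop horb hg hαβ.symm hβ hgα hgβ
  obtain ⟨β', hβ'β, hβ'⟩ := hr.exists_ne_rel htrans hbot β
  exact hr.eq_one_of_rel htrans hbot htop horb hg hβ'β hβ' hgβ
    (hr.apply_eq_self_of_rel htrans horb hg (fun h => hβ (r.symm h)) hgβ hgα hβ')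

end IsGInvariantSetoid

/-- Wielandt: a 3/2-transitive group is either primitive or Frobenius. -/
theorem threeHalvesTrans_primitive_or_frobenius {Ω : Type*} [Fintype Ω]
    (G : Subgroup (Equiv.Perm Ω)) (hG : IsThreeHalvesTrans G) :
    IsPrimitiveSub G ∨ IsFrobeniusSub G := by
  obtain ⟨htrans, m, hm, horb⟩ := hG
  by_cases hprim : ∀ r : Setoid Ω, IsGInvariantSetoid G r → r = ⊥ ∨ r = ⊤
  · exact Or.inl ⟨htrans, hprim⟩
  push Not at hprim
  obtain ⟨r, hr, hbot, htop⟩ := hprim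
  refine Or.inr ⟨htrans, fun α => ?_, fun g hg α β hαβ hgα hgβ =>
    hr.eq_one_of_apply_eq_self htrans hbot htop horb hg hαβ hgα hgβ⟩
  obtain ⟨β, hβα, -⟩ := hr.exists_ne_rel htrans hbot α
  exact exists_ne_one_apply_eq_self (horb α β hβα ▸ hm)
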